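/- arXiv:1009.1741 — 2 statements merged into one kernel-verified Lean document; each statement's English description precedes it below -/
import Mathlib

section
/- There is a bijection between strict Gelfand-Tsetlin patterns of rank r with fixed top row λ+ρ and admissible states of the six-vertex model on an (r+1) × (λ_r + r + 1) grid with the boundary conditions determined by λ: minus spins on top boundary at columns λ_j + j, plus spins elsewhere on top, plus spins on the bottom boundary and left boundary, and minus spins on the right boundary. -/
/-- The six admissible six-vertex configurations, given as spins
(north, south, west, east), with `true` = `+` and `false` = `-`. -/
def Adm (nb sb wb eb : Bool) : Prop :=
  (nb, sb, wb, eb) = (true, true, true, true) ∨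
  (nb, sb, wb, eb) = (false, true, true, false) ∨
  (nb, sb, wb, eb) = (true, true, false, false) ∨
  (nb, sb, wb, eb) = (false, false, false, false) ∨
  (nb, sb, wb, eb) = (false, false, true, true) ∨
  (nb, sb, wb, eb) = (true, false, false, true)

/-- A strict Gelfand-Tsetlin pattern of rank `r` with top row `λ + ρ`, encoded as a
function `a i j` (rows `0 ≤ i ≤ r`, entries `i ≤ j ≤ r`), normalized to `0` off-domain. -/
def IsGTPattern (r : ℕ) (lam : ℕ → ℕ) (a : ℕ → ℕ → ℕ) : Prop :=
  (∀ i j, ¬(i ≤ j ∧ j ≤ r) → a i j = 0) ∧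
  (∀ j, j ≤ r → a 0 j = lam (r - j) + (r - j)) ∧
  (∀ i j, 1 ≤ i → i ≤ j → j ≤ r → a i j ≤ a (i - 1) (j - 1) ∧ a (i - 1) j ≤ a i j) ∧
  (∀ i j, i ≤ j → j < r → a i (j + 1) < a i j)

/-- An admissible state of the six-vertex model on an `(r+1) × (N+1)` grid with the
boundary conditions determined by `λ` (here `N = λ_r + r`): vertical spins `s.1 i c`
(layers `0 ≤ i ≤ r+1` from top, columns `0 ≤ c ≤ N` labeled from the right), horizontal
spins `s.2 i c` (rows `0 ≤ i ≤ r`, edges `0 ≤ c ≤ N+1` from the right); minus spins on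
the top boundary exactly at the columns `λ_j + j`, plus spins on the bottom boundary,
plus on the left of each row, minus on the right of each row; all vertices admissible.
Off-domain values are normalized to `true`. -/
def IsIceState (r N : ℕ) (lam : ℕ → ℕ) (s : (ℕ → ℕ → Bool) × (ℕ → ℕ → Bool)) : Prop :=
  (∀ i c, ¬(i ≤ r + 1 ∧ c ≤ N) → s.1 i c = true) ∧
  (∀ i c, ¬(i ≤ r ∧ c ≤ N + 1) → s.2 i c = true) ∧
  (∀ c, c ≤ N → (s.1 0 c = false ↔ ∃ j, j ≤ r ∧ c = lam j + j)) ∧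
  (∀ c, c ≤ N → s.1 (r + 1) c = true) ∧
  (∀ i, i ≤ r → s.2 i 0 = false) ∧
  (∀ i, i ≤ r → s.2 i (N + 1) = true) ∧
  (∀ i c, i ≤ r → c ≤ N → Adm (s.1 i c) (s.1 (i + 1) c) (s.2 i (c + 1)) (s.2 i c))

/-!
Both sides are determined by the sets of `-` columns of the layers: row `i` of the pattern,
read in decreasing order, is the set of columns where layer `i` carries a `-` spin. The ice rule
along row `i` of vertices says that, for every column `c`, the number of `-` spins of layer `i`
to the right of `c` exceeds that of layer `i + 1` by `1` or `0`, according as the horizontal edge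
at `c` carries `+` or `-`. So the horizontal spins are determined by the vertical ones, and
vertical spins extend to an admissible state exactly when these counts differ by `0` or `1`,
which is the counting form of the interlacing inequalities of a Gelfand-Tsetlin pattern.
-/

open Finset

theorem adm_iff_toNat_add_eq {n s w e : Bool} :
    Adm n s w e ↔ n.toNat + w.toNat = s.toNat + e.toNat := by
  cases n <;> cases s <;> cases w <;> cases e <;> simp [Adm]

section StrictAntiRow

variable {x y : ℕ → ℕ} {lo r : ℕ}

theorem count_mem_image_eq_card_filter (hx : Set.InjOn x (Set.Icc lo r)) (c : ℕ) :
    Nat.count (· ∈ (Icc lo r).image x) c = #{j ∈ Icc lo r | x j < c} := by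
  have himage :
      {c' ∈ range c | c' ∈ (Icc lo r).image x} = {j ∈ Icc lo r | x j < c}.image x := by
    ext c'
    simp only [mem_filter, mem_range, mem_image]
    grind
  rw [Nat.count_eq_card_filter_range, himage,
    card_image_of_injOn (hx.mono fun j hj => by simpa using (mem_filter.1 hj).1)]

theorem card_filter_lt_apply (hx : StrictAntiOn x (Set.Icc lo r)) {j : ℕ}
    (hj : j ∈ Set.Icc lo r) : #{j' ∈ Icc lo r | x j' < x j} = r - j := by
  have : {j' ∈ Icc lo r | x j' < x j} = Ioc j r := by
    ext j'
    simp only [mem_filter, mem_Icc, mem_Ioc]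
    refine ⟨fun ⟨hj', hlt⟩ => ⟨?_, hj'.2⟩, fun hj' => ⟨⟨hj.1.trans hj'.1.le, hj'.2⟩, ?_⟩⟩
    · exact lt_of_not_ge fun hle => hlt.not_ge (hx.antitoneOn hj' hj hle)
    · exact hx hj ⟨hj.1.trans hj'.1.le, hj'.2⟩ hj'.1
  rw [this, Nat.card_Ioc]

theorem nth_mem_image_eq (hx : StrictAntiOn x (Set.Icc lo r)) {j : ℕ}
    (hj : j ∈ Set.Icc lo r) : Nat.nth (· ∈ (Icc lo r).image x) (r - j) = x j := by
  rw [← card_filter_lt_apply hx hj, ← count_mem_image_eq_card_filter hx.injOn]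
  exact Nat.nth_count (mem_image_of_mem x (by simpa using hj))

theorem eqOn_of_image_eq (hx : StrictAntiOn x (Set.Icc lo r)) (hy : StrictAntiOn y (Set.Icc lo r))
    (h : (Icc lo r).image x = (Icc lo r).image y) : Set.EqOn x y (Set.Icc lo r) := fun j hj => by
  rw [← nth_mem_image_eq hx hj, ← nth_mem_image_eq hy hj, h]

theorem card_Icc_le_card_filter_lt (hx : AntitoneOn x (Set.Icc lo r)) {k c : ℕ} (hk : lo ≤ k)
    (hkc : x k < c) : r + 1 - k ≤ #{j ∈ Icc lo r | x j < c} := by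
  rw [← Nat.card_Icc]
  refine card_le_card fun j hj => ?_
  rw [mem_Icc] at hj
  simp only [mem_filter, mem_Icc]
  exact ⟨⟨hk.trans hj.1, hj.2⟩, (hx ⟨hk, hj.1.trans hj.2⟩ ⟨hk.trans hj.1, hj.2⟩ hj.1).trans_lt hkc⟩

theorem interlace_iff_card_filter_lt (hx : StrictAntiOn x (Set.Icc lo r))
    (hy : StrictAntiOn y (Set.Icc (lo + 1) r)) :
    (∀ j ∈ Icc (lo + 1) r, x j ≤ y j ∧ y j ≤ x (j - 1)) ↔
      ∀ c, #{j ∈ Icc (lo + 1) r | y j < c} ≤ #{j ∈ Icc lo r | x j < c} ∧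
        #{j ∈ Icc lo r | x j < c} ≤ #{j ∈ Icc (lo + 1) r | y j < c} + 1 := by
  constructor
  · intro hxy c
    constructor
    · refine card_le_card fun j hj => ?_
      simp only [mem_filter, mem_Icc] at hj ⊢
      exact ⟨⟨by omega, hj.1.2⟩, (hxy j (mem_Icc.2 hj.1)).1.trans_lt hj.2⟩
    · -- shifting indices by one maps `x`-entries below `c` (except at `r`) to `y`-entries below `c`
      calc #{j ∈ Icc lo r | x j < c}
          ≤ #(insert r ({j ∈ Icc (lo + 1) r | y j < c}.image (· - 1))) := by
            refine card_le_card fun j hj => ?_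
            simp only [mem_filter, mem_Icc, mem_insert, mem_image] at hj ⊢
            rcases eq_or_lt_of_le hj.1.2 with hjr | hjr
            · exact Or.inl hjr
            · refine Or.inr ⟨j + 1, ⟨⟨by omega, hjr⟩, ?_⟩, rfl⟩
              have := (hxy (j + 1) (mem_Icc.2 ⟨by omega, hjr⟩)).2
              simp only [Nat.add_sub_cancel] at this
              exact this.trans_lt hj.2
        _ ≤ _ := (card_insert_le _ _).trans (Nat.add_le_add_right card_image_le 1)
  · intro hcount j hj
    rw [mem_Icc] at hj
    constructor
    · by_contra! hlt
      have h1 := card_Icc_le_card_filter_lt hy.antitoneOn hj.1 hlt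
      have h2 := card_filter_lt_apply hx ⟨by omega, hj.2⟩
      have := (hcount (x j)).1
      omega
    · by_contra! hlt
      have h1 := card_Icc_le_card_filter_lt hx.antitoneOn (by omega : lo ≤ j - 1) hlt
      have h2 := card_filter_lt_apply hy ⟨hj.1, hj.2⟩
      have := (hcount (y j)).2
      omega

end StrictAntiRow

section Enumeration

variable {p : ℕ → Prop} [DecidablePred p] {n lo r : ℕ}

theorem strictAntiOn_nth_sub (hcount : Nat.count p n = r + 1 - lo) :
    StrictAntiOn (fun j => Nat.nth p (r - j)) (Set.Icc lo r) := by
  intro j hj j' hj' hjj'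
  rw [Set.mem_Icc] at hj hj'
  exact Nat.nth_lt_nth' (by omega) fun hf =>
    (by omega : r - j < Nat.count p n).trans_le (Nat.count_le_card hf n)

theorem mem_image_nth_sub_iff (hp : ∀ c, p c → c < n) (hcount : Nat.count p n = r + 1 - lo)
    {c : ℕ} : c ∈ (Icc lo r).image (fun j => Nat.nth p (r - j)) ↔ p c := by
  constructor
  · rw [mem_image]
    rintro ⟨j, hj, rfl⟩
    rw [mem_Icc] at hj
    exact Nat.nth_mem _ fun hf =>
      (by omega : r - j < Nat.count p n).trans_le (Nat.count_le_card hf n)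
  · intro hc
    have hlt := Nat.count_strict_mono hc (hp c hc)
    refine mem_image.2 ⟨r - Nat.count p c, mem_Icc.2 ⟨by omega, Nat.sub_le _ _⟩, ?_⟩
    rw [Nat.sub_sub_self (by omega), Nat.nth_count hc]

end Enumeration

/-- Columns are numbered from the right: this counts the `-` spins of layer `i` to the right of
column `c`. -/
def minusCount (v : ℕ → ℕ → Bool) (i c : ℕ) : ℕ := Nat.count (fun c' => v i c' = false) c

theorem minusCount_zero (v : ℕ → ℕ → Bool) (i : ℕ) : minusCount v i 0 = 0 := Nat.count_zero _

theorem minusCount_succ (v : ℕ → ℕ → Bool) (i c : ℕ) :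
    minusCount v i (c + 1) = minusCount v i c + (!v i c).toNat := by
  rw [minusCount, minusCount, Nat.count_succ]
  cases v i c <;> rfl

/-- The horizontal spins forced by the ice rule: edge `c` of row `i`, east of column `c`,
carries `+` when layer `i` has more `-` spins to its right than layer `i + 1`. -/
def horizontalSpins (r : ℕ) (v : ℕ → ℕ → Bool) (i c : ℕ) : Bool :=
  if i ≤ r then decide (minusCount v (i + 1) c < minusCount v i c) else true

namespace IsIceState

variable {r N : ℕ} {lam : ℕ → ℕ} {s : (ℕ → ℕ → Bool) × (ℕ → ℕ → Bool)}

theorem adm (hs : IsIceState r N lam s) {i : ℕ} (hi : i ≤ r) (c : ℕ) :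
    Adm (s.1 i c) (s.1 (i + 1) c) (s.2 i (c + 1)) (s.2 i c) := by
  by_cases hc : c ≤ N
  · exact hs.2.2.2.2.2.2 i c hi hc
  have hright : s.2 i c = true := by
    obtain rfl | hc' := (Nat.succ_le_of_lt (not_le.1 hc)).eq_or_lt
    · exact hs.2.2.2.2.2.1 i hi
    · exact hs.2.1 i c (by omega)
  rw [hs.1 i c (by omega), hs.1 (i + 1) c (by omega), hs.2.1 i (c + 1) (by omega), hright]
  exact Or.inl rfl

theorem minusCount_eq_add_toNat (hs : IsIceState r N lam s) {i : ℕ} (hi : i ≤ r) (c : ℕ) :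
    minusCount s.1 i c = minusCount s.1 (i + 1) c + (s.2 i c).toNat := by
  induction c with
  | zero => simp [minusCount_zero, hs.2.2.2.2.1 i hi]
  | succ c ih =>
    have hadm := adm_iff_toNat_add_eq.1 (hs.adm hi c)
    rw [minusCount_succ, minusCount_succ, ih]
    generalize s.1 i c = n, s.1 (i + 1) c = sb, s.2 i (c + 1) = w, s.2 i c = e at hadm ⊢
    cases n <;> cases sb <;> cases w <;> cases e <;> simp at hadm ⊢

theorem snd_eq_horizontalSpins (hs : IsIceState r N lam s) : s.2 = horizontalSpins r s.1 := by
  funext i c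
  by_cases hi : i ≤ r
  · rw [horizontalSpins, if_pos hi, hs.minusCount_eq_add_toNat hi]
    cases s.2 i c <;> simp
  · rw [horizontalSpins, if_neg hi, hs.2.1 i c (by omega)]

theorem minusCount_eq_sub (hs : IsIceState r N lam s) {i : ℕ} (hi : i ≤ r + 1) :
    minusCount s.1 i (N + 1) = r + 1 - i := by
  induction hi using Nat.decreasingInduction with
  | self =>
    rw [Nat.sub_self, minusCount, Nat.count_eq_card_filter_range, card_eq_zero, filter_eq_empty_iff]
    intro c hc
    rw [hs.2.2.2.1 c (Nat.lt_succ_iff.1 (mem_range.1 hc))]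
    simp
  | of_succ i hir ih =>
    rw [hs.minusCount_eq_add_toNat (by omega), ih, hs.2.2.2.2.2.1 i (by omega), Bool.toNat_true]
    omega

end IsIceState

theorem isIceState_horizontalSpins {r N : ℕ} {lam : ℕ → ℕ} {v : ℕ → ℕ → Bool}
    (hoff : ∀ i c, ¬(i ≤ r + 1 ∧ c ≤ N) → v i c = true)
    (htop : ∀ c, c ≤ N → (v 0 c = false ↔ ∃ j, j ≤ r ∧ c = lam j + j))
    (hbot : ∀ c, c ≤ N → v (r + 1) c = true)
    (hinterlace : ∀ i ≤ r, ∀ c, minusCount v (i + 1) c ≤ minusCount v i c ∧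
      minusCount v i c ≤ minusCount v (i + 1) c + 1)
    (hfull : ∀ i ≤ r, ∀ c, N < c → minusCount v (i + 1) c < minusCount v i c) :
    IsIceState r N lam (v, horizontalSpins r v) := by
  refine ⟨hoff, fun i c hic => ?_, htop, hbot, fun i hi => ?_, fun i hi => ?_, fun i c hi _ => ?_⟩
  · by_cases hi : i ≤ r
    · simpa [horizontalSpins, hi] using hfull i hi c (by omega)
    · simp [horizontalSpins, hi]
  · simp [horizontalSpins, hi, minusCount_zero]
  · simpa [horizontalSpins, hi] using hfull i hi (N + 1) (by omega)
  · rw [adm_iff_toNat_add_eq]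
    simp only [horizontalSpins, if_pos hi]
    have hc := hinterlace i hi c
    have hc1 := hinterlace i hi (c + 1)
    rw [minusCount_succ, minusCount_succ] at hc1 ⊢
    generalize minusCount v i c = a, minusCount v (i + 1) c = b, v i c = n, v (i + 1) c = sb
      at hc hc1 ⊢
    cases n <;> cases sb <;> simp only [Bool.not_false, Bool.not_true, Bool.toNat, cond_true,
      cond_false, Bool.cond_decide] at hc1 ⊢ <;> split_ifs <;> omega

namespace IsGTPattern

variable {r : ℕ} {lam : ℕ → ℕ} {a : ℕ → ℕ → ℕ}

theorem strictAntiOn_row (h : IsGTPattern r lam a) (i : ℕ) : StrictAntiOn (a i) (Set.Icc i r) :=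
  strictAntiOn_of_add_one_lt Set.ordConnected_Icc fun j _ hj hj1 => h.2.2.2 i j hj.1 hj1.2

theorem interlace (h : IsGTPattern r lam a) (i : ℕ) :
    ∀ j ∈ Icc (i + 1) r, a i j ≤ a (i + 1) j ∧ a (i + 1) j ≤ a i (j - 1) := by
  intro j hj
  rw [mem_Icc] at hj
  have := h.2.2.1 (i + 1) j (by omega) hj.1 hj.2
  rw [Nat.add_sub_cancel] at this
  exact this.symm

theorem apply_le (h : IsGTPattern r lam a) {i j : ℕ} (hij : i ≤ j) (hjr : j ≤ r) :
    a i j ≤ lam r + r := by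
  induction i generalizing j with
  | zero =>
    have htop := h.2.1 0 (Nat.zero_le r)
    rw [Nat.sub_zero] at htop
    exact htop ▸ (h.strictAntiOn_row 0).antitoneOn ⟨le_rfl, Nat.zero_le r⟩ ⟨hij, hjr⟩ hij
  | succ i ih =>
    exact ((h.interlace i j (mem_Icc.2 ⟨hij, hjr⟩)).2).trans (ih (by omega) (by omega))

end IsGTPattern

def verticalSpins (r : ℕ) (a : ℕ → ℕ → ℕ) (i c : ℕ) : Bool :=
  decide (c ∉ (Icc i r).image (a i))

def stateOf (r : ℕ) (a : ℕ → ℕ → ℕ) : (ℕ → ℕ → Bool) × (ℕ → ℕ → Bool) :=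
  (verticalSpins r a, horizontalSpins r (verticalSpins r a))

theorem verticalSpins_eq_false {r : ℕ} {a : ℕ → ℕ → ℕ} {i c : ℕ} :
    verticalSpins r a i c = false ↔ c ∈ (Icc i r).image (a i) := by
  rw [verticalSpins, decide_eq_false_iff_not, not_not]

theorem minusCount_verticalSpins {r : ℕ} {a : ℕ → ℕ → ℕ} {i : ℕ}
    (hinj : Set.InjOn (a i) (Set.Icc i r)) (c : ℕ) :
    minusCount (verticalSpins r a) i c = #{j ∈ Icc i r | a i j < c} := by
  rw [← count_mem_image_eq_card_filter hinj, minusCount]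
  simp only [verticalSpins_eq_false]

theorem mem_image_topRow_iff {r : ℕ} {lam : ℕ → ℕ} {c : ℕ} :
    c ∈ (Icc 0 r).image (fun j => lam (r - j) + (r - j)) ↔ ∃ j ≤ r, c = lam j + j := by
  rw [mem_image]
  constructor
  · rintro ⟨j, hj, rfl⟩
    exact ⟨r - j, Nat.sub_le r j, rfl⟩
  · rintro ⟨j, hj, rfl⟩
    refine ⟨r - j, mem_Icc.2 ⟨Nat.zero_le _, Nat.sub_le r j⟩, ?_⟩
    rw [Nat.sub_sub_self hj]

theorem strictAntiOn_topRow {r : ℕ} {lam : ℕ → ℕ} (hmono : MonotoneOn lam (Set.Icc 0 r)) :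
    StrictAntiOn (fun j => lam (r - j) + (r - j)) (Set.Icc 0 r) := by
  intro j hj j' hj' hjj'
  rw [Set.mem_Icc] at hj hj'
  show lam (r - j') + (r - j') < lam (r - j) + (r - j)
  have := hmono ⟨Nat.zero_le _, Nat.sub_le r j'⟩ ⟨Nat.zero_le _, Nat.sub_le r j⟩
    (by omega : r - j' ≤ r - j)
  omega

namespace IsGTPattern

variable {r : ℕ} {lam : ℕ → ℕ} {a : ℕ → ℕ → ℕ}

theorem isIceState (h : IsGTPattern r lam a) : IsIceState r (lam r + r) lam (stateOf r a) := by
  have hcount (i c : ℕ) := minusCount_verticalSpins (r := r) (h.strictAntiOn_row i).injOn c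
  refine isIceState_horizontalSpins (fun i c hic => ?_) (fun c _ => ?_) (fun c _ => ?_)
    (fun i _ c => ?_) (fun i hi c hc => ?_)
  · rw [verticalSpins, decide_eq_true_iff, mem_image]
    rintro ⟨j, hj, rfl⟩
    rw [mem_Icc] at hj
    exact hic ⟨by omega, h.apply_le hj.1 hj.2⟩
  · rw [verticalSpins_eq_false, ← mem_image_topRow_iff,
      image_congr fun j hj => h.2.1 j (mem_Icc.1 (mem_coe.1 hj)).2]
  · simp [verticalSpins]
  · rw [hcount, hcount]
    exact (interlace_iff_card_filter_lt (h.strictAntiOn_row i) (h.strictAntiOn_row (i + 1))).1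
      (h.interlace i) c
  · have hall (i : ℕ) : #{j ∈ Icc i r | a i j < c} = r + 1 - i := by
      rw [filter_true_of_mem fun j hj => ?_, Nat.card_Icc]
      rw [mem_Icc] at hj
      exact (h.apply_le hj.1 hj.2).trans_lt hc
    rw [hcount, hcount, hall, hall]
    omega

end IsGTPattern

noncomputable def patternOfSpins (r : ℕ) (v : ℕ → ℕ → Bool) (i j : ℕ) : ℕ :=
  if i ≤ j ∧ j ≤ r then Nat.nth (fun c => v i c = false) (r - j) else 0

theorem patternOfSpins_eqOn (r : ℕ) (v : ℕ → ℕ → Bool) (i : ℕ) :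
    Set.EqOn (patternOfSpins r v i) (fun j => Nat.nth (fun c => v i c = false) (r - j))
      (Set.Icc i r) := fun _ hj => if_pos hj

theorem IsGTPattern.patternOfSpins_verticalSpins {r : ℕ} {lam : ℕ → ℕ} {a : ℕ → ℕ → ℕ}
    (h : IsGTPattern r lam a) : patternOfSpins r (verticalSpins r a) = a := by
  funext i j
  by_cases hij : i ≤ j ∧ j ≤ r
  · rw [patternOfSpins, if_pos hij, ← nth_mem_image_eq (h.strictAntiOn_row i) hij]
    simp only [verticalSpins_eq_false]
  · rw [patternOfSpins, if_neg hij, h.1 i j hij]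

namespace IsIceState

variable {r N : ℕ} {lam : ℕ → ℕ} {s : (ℕ → ℕ → Bool) × (ℕ → ℕ → Bool)}

theorem lt_of_fst_eq_false (hs : IsIceState r N lam s) {i c : ℕ} (hc : s.1 i c = false) :
    c < N + 1 := by
  by_contra h
  rw [hs.1 i c (by omega)] at hc
  exact Bool.noConfusion hc

theorem strictAntiOn_patternOfSpins (hs : IsIceState r N lam s) {i : ℕ} (hi : i ≤ r + 1) :
    StrictAntiOn (patternOfSpins r s.1 i) (Set.Icc i r) :=
  (strictAntiOn_nth_sub (hs.minusCount_eq_sub hi)).congr (patternOfSpins_eqOn r s.1 i).symm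

theorem mem_image_patternOfSpins_iff (hs : IsIceState r N lam s) {i c : ℕ} :
    c ∈ (Icc i r).image (patternOfSpins r s.1 i) ↔ s.1 i c = false := by
  by_cases hi : i ≤ r + 1
  · rw [image_congr (coe_Icc i r ▸ patternOfSpins_eqOn r s.1 i)]
    exact mem_image_nth_sub_iff (fun c => hs.lt_of_fst_eq_false) (hs.minusCount_eq_sub hi)
  · rw [Icc_eq_empty (by omega), image_empty, hs.1 i c (by omega)]
    simp

theorem card_filter_patternOfSpins_lt (hs : IsIceState r N lam s) {i : ℕ} (hi : i ≤ r + 1)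
    (c : ℕ) : #{j ∈ Icc i r | patternOfSpins r s.1 i j < c} = minusCount s.1 i c := by
  rw [← count_mem_image_eq_card_filter (hs.strictAntiOn_patternOfSpins hi).injOn, minusCount]
  simp only [hs.mem_image_patternOfSpins_iff]

theorem verticalSpins_patternOfSpins (hs : IsIceState r N lam s) :
    verticalSpins r (patternOfSpins r s.1) = s.1 := by
  funext i c
  simp only [verticalSpins, hs.mem_image_patternOfSpins_iff]
  cases s.1 i c <;> rfl

theorem stateOf_patternOfSpins (hs : IsIceState r N lam s) :
    stateOf r (patternOfSpins r s.1) = s := by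
  rw [stateOf, hs.verticalSpins_patternOfSpins, ← hs.snd_eq_horizontalSpins]

theorem fst_zero_eq_false_iff (hs : IsIceState r (lam r + r) lam s)
    (hmono : MonotoneOn lam (Set.Icc 0 r)) (c : ℕ) :
    s.1 0 c = false ↔ ∃ j ≤ r, c = lam j + j := by
  by_cases hc : c ≤ lam r + r
  · exact hs.2.2.1 c hc
  · rw [hs.1 0 c (by omega), Bool.true_eq_false, false_iff]
    rintro ⟨j, hj, rfl⟩
    have := hmono ⟨Nat.zero_le j, hj⟩ ⟨Nat.zero_le r, le_rfl⟩ hj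
    omega

theorem isGTPattern (hs : IsIceState r (lam r + r) lam s)
    (hdom : ∀ j, 1 ≤ j → j ≤ r → lam (j - 1) ≤ lam j) :
    IsGTPattern r lam (patternOfSpins r s.1) := by
  have hmono : MonotoneOn lam (Set.Icc 0 r) :=
    monotoneOn_of_le_add_one Set.ordConnected_Icc fun k _ _ hk => by
      simpa using hdom (k + 1) (by omega) hk.2
  have hrow {i : ℕ} (hi : i ≤ r + 1) := hs.strictAntiOn_patternOfSpins hi
  refine ⟨fun i j hij => if_neg hij, fun j hj => ?_, fun i j hi hij hjr => ?_,
    fun i j hij hjr => hrow (by omega) ⟨hij, by omega⟩ ⟨by omega, hjr⟩ (Nat.lt_succ_self j)⟩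
  · refine eqOn_of_image_eq (hrow (Nat.zero_le _)) (strictAntiOn_topRow hmono) ?_
      ⟨Nat.zero_le j, hj⟩
    ext c
    rw [hs.mem_image_patternOfSpins_iff, hs.fst_zero_eq_false_iff hmono, mem_image_topRow_iff]
  · obtain ⟨i, rfl⟩ : ∃ i', i = i' + 1 := ⟨i - 1, by omega⟩
    have hinterlace := (interlace_iff_card_filter_lt (hrow (by omega : i ≤ r + 1))
      (hrow (by omega : i + 1 ≤ r + 1))).2 fun c => by
        rw [hs.card_filter_patternOfSpins_lt (by omega),
          hs.card_filter_patternOfSpins_lt (by omega),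
          hs.minusCount_eq_add_toNat (i := i) (by omega) c]
        have := Bool.toNat_le (s.2 i c)
        omega
    rw [Nat.add_sub_cancel]
    exact (hinterlace j (mem_Icc.2 ⟨hij, hjr⟩)).symm

end IsIceState

theorem stmt_1_general (r : ℕ) (lam : ℕ → ℕ)
    (hdom : ∀ j, 1 ≤ j → j ≤ r → lam (j - 1) ≤ lam j) :
    Nonempty ({a : ℕ → ℕ → ℕ // IsGTPattern r lam a} ≃
      {s : (ℕ → ℕ → Bool) × (ℕ → ℕ → Bool) // IsIceState r (lam r + r) lam s}) :=
  ⟨{ toFun := fun a => ⟨stateOf r a.1, a.2.isIceState⟩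
     invFun := fun s => ⟨patternOfSpins r s.1.1, s.2.isGTPattern hdom⟩
     left_inv := fun a => Subtype.ext a.2.patternOfSpins_verticalSpins
     right_inv := fun s => Subtype.ext s.2.stateOf_patternOfSpins }⟩

/-- There is a bijection between strict Gelfand-Tsetlin patterns of rank `r`
with fixed top row `λ + ρ` and admissible states of the six-vertex model on the
`(r+1) × (λ_r + r + 1)` grid with the boundary conditions determined by `λ`. -/
theorem stmt_1 (r : ℕ) (lam : ℕ → ℕ) (hlam0 : lam 0 = 0)
    (hdom : ∀ j, 1 ≤ j → j ≤ r → lam (j - 1) ≤ lam j) :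
    Nonempty ({a : ℕ → ℕ → ℕ // IsGTPattern r lam a} ≃
      {s : (ℕ → ℕ → Bool) × (ℕ → ℕ → Bool) // IsIceState r (lam r + r) lam s}) :=
  stmt_1_general r lam hdom
end

section
/- For a strict Gelfand-Tsetlin pattern T of rank r corresponding under the bijection to a state S of Gamma ice, the product of Boltzmann weights over all vertices of S equals G^Γ(T) · z_{r+1}^{d_0(T)−d_1(T)} · z_r^{d_1(T)−d_2(T)} ⋯ z_2^{d_{r−1}(T)−d_r(T)} · z_1^{d_r(T)}, where d_i(T) is the sum of the entries in the i-th row of T. -/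
/-- Gamma-ice Boltzmann weight of a vertex with spins (north, south, west, east),
spectral parameter `zi`, charge `ch`, and Gauss sums `g`, `h`:
the six admissible configurations have weights `(1, 1, z_i, z_i, g(a), h(a)z_i)`
as in table (4.1) of the paper; inadmissible configurations get weight `0`. -/
def wtGamma {K : Type*} [CommRing K] (g h : ℕ → K) (zi : K) (ch : ℕ)
    (nb sb wb eb : Bool) : K :=
  match nb, sb, wb, eb with
  | true, true, true, true => 1
  | false, true, true, false => 1
  | true, true, false, false => zi
  | false, false, false, false => zi
  | false, false, true, true => g ch
  | true, false, false, true => h ch * zi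
  | _, _, _, _ => 0

/-- The charge at a Gamma-ice vertex in row `i`, column `c`: the number of `+` horizontal
spins in row `i` to the right of the vertex (horizontal edges `0, …, c`, labeled from the
right boundary edge `0`). -/
def chargeGamma (H : ℕ → ℕ → Bool) (i c : ℕ) : ℕ :=
  ((Finset.range (c + 1)).filter fun c' => H i c' = true).card

/-- `d_i(T)`: the sum of the entries in the `i`-th row of the pattern. -/
def rowSum (r : ℕ) (a : ℕ → ℕ → ℕ) (i : ℕ) : ℕ := ∑ j ∈ Finset.Icc i r, a i j

/-- `b_{i,j} = ∑_{l=j}^r (a_{i,l} − a_{i−1,l})`. -/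
def bGamma (r : ℕ) (a : ℕ → ℕ → ℕ) (i j : ℕ) : ℕ :=
  ∑ l ∈ Finset.Icc j r, (a i l - a (i - 1) l)

/-- `G^Γ(T) = ∏_{i=1}^r ∏_{j=i}^r γ(a_{i,j})` for a strict pattern. -/
def GGamma {K : Type*} [CommRing K] (g h : ℕ → K) (r : ℕ) (a : ℕ → ℕ → ℕ) : K :=
  ∏ i ∈ Finset.Icc 1 r, ∏ j ∈ Finset.Icc i r,
    if a i j = a (i - 1) (j - 1) then g (bGamma r a i j)
    else if a i j = a (i - 1) j then (1 : K)
    else h (bGamma r a i j)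

open Finset

structure IsStrictGTPattern (r : ℕ) (a : ℕ → ℕ → ℕ) : Prop where
  interlace : ∀ i j, 1 ≤ i → i ≤ j → j ≤ r → a i j ≤ a (i - 1) (j - 1) ∧ a (i - 1) j ≤ a i j
  strict : ∀ i j, i ≤ j → j < r → a i (j + 1) < a i j

/-- Columns are numbered `N, …, 1, 0` from left to right, and `V i` holds the north edges of
ice row `i`. -/
structure IsGammaIceOf (r N : ℕ) (a : ℕ → ℕ → ℕ) (V H : ℕ → ℕ → Bool) : Prop where
  width : N = a 0 0
  vertical : ∀ i c, i ≤ r → c ≤ N → (V i c = false ↔ ∃ j, i ≤ j ∧ j ≤ r ∧ c = a i j)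
  bottom : ∀ c, c ≤ N → V (r + 1) c = true
  right : ∀ i, i ≤ r → H i 0 = false
  adm : ∀ i c, i ≤ r → c ≤ N → Adm (V i c) (V (i + 1) c) (H i (c + 1)) (H i c)

lemma Adm.toNat_add_toNat {n s w e : Bool} (h : Adm n s w e) :
    n.toNat + w.toNat = s.toNat + e.toNat := by
  rcases h with h | h | h | h | h | h <;> simp_all

lemma toNat_add_card_filter_eq_of_adm {Vt Vb H : ℕ → Bool} (h0 : H 0 = false) {m : ℕ}
    (hadm : ∀ c < m, Adm (Vt c) (Vb c) (H (c + 1)) (H c)) :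
    (H m).toNat + #{c ∈ range m | Vb c = false} = #{c ∈ range m | Vt c = false} := by
  induction m with
  | zero => simp [h0]
  | succ m ih =>
    have hflux := (hadm m m.lt_succ_self).toNat_add_toNat
    have ih := ih fun c hc => hadm c (by omega)
    rw [range_add_one, filter_insert, filter_insert]
    cases hVt : Vt m <;> cases hVb : Vb m <;> simp_all <;> omega

lemma chargeGamma_eq_sum_toNat (H : ℕ → ℕ → Bool) (i c : ℕ) :
    chargeGamma H i c = ∑ c' ∈ range (c + 1), (H i c').toNat := by
  rw [chargeGamma, card_filter]
  exact sum_congr rfl fun c' _ => by cases H i c' <;> rfl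

lemma StrictAntiOn.card_filter_lt {f : ℕ → ℕ} {i r j : ℕ} (hf : StrictAntiOn f (Set.Icc i r))
    (hj : j ∈ Icc i r) : #{l ∈ Icc i r | f l < f j} = r - j := by
  rw [mem_Icc] at hj
  have : {l ∈ Icc i r | f l < f j} = Ioc j r := by
    ext l
    simp only [mem_filter, mem_Icc, mem_Ioc]
    constructor
    · rintro ⟨hl, hlt⟩
      exact ⟨(hf.lt_iff_gt hl hj).1 hlt, hl.2⟩
    · rintro ⟨hjl, hlr⟩
      exact ⟨⟨by omega, hlr⟩, hf ⟨hj.1, hj.2⟩ ⟨by omega, hlr⟩ hjl⟩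
  rw [this, Nat.card_Ioc]

lemma sum_range_card_filter_lt {ι : Type*} (s : Finset ι) (f : ι → ℕ) (m : ℕ) :
    ∑ c ∈ range (m + 1), #{l ∈ s | f l < c} = ∑ l ∈ s, (m - f l) := by
  simp only [card_filter]
  rw [sum_comm]
  refine sum_congr rfl fun l _ => ?_
  rw [← card_filter, ← Nat.card_Ioc (f l) m]
  congr 1
  ext c
  simp only [mem_filter, mem_range, mem_Ioc]
  omega

lemma sum_tsub_add_sum_of_le {ι : Type*} {s : Finset ι} {f : ι → ℕ} {m : ℕ}
    (hf : ∀ l ∈ s, f l ≤ m) : ∑ l ∈ s, (m - f l) + ∑ l ∈ s, f l = #s * m := by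
  rw [← sum_add_distrib, sum_congr rfl fun l hl => Nat.sub_add_cancel (hf l hl), sum_const,
    smul_eq_mul]

lemma sum_tsub_Icc_eq_of_le {f : ℕ → ℕ} {c i j r : ℕ} (hij : i ≤ j)
    (hf : ∀ l, i ≤ l → l < j → c ≤ f l) :
    ∑ l ∈ Icc i r, (c - f l) = ∑ l ∈ Icc j r, (c - f l) := by
  refine (sum_subset (Icc_subset_Icc_left hij) fun l hl hlj => ?_).symm
  simp only [mem_Icc] at hl hlj
  exact Nat.sub_eq_zero_of_le (hf l hl.1 (by omega))

section Weights

variable {K : Type*} [CommRing K]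

def gaussFactor (g h : ℕ → K) (ch : ℕ) (nb sb eb : Bool) : K :=
  if sb then 1 else if nb then h ch else if eb then g ch else 1

lemma wtGamma_eq_of_adm (g h : ℕ → K) (zi : K) (ch : ℕ) {n s w e : Bool} (hadm : Adm n s w e) :
    wtGamma g h zi ch n s w e = gaussFactor g h ch n s e * zi ^ (!w).toNat := by
  rcases hadm with h | h | h | h | h | h <;>
  · simp only [Prod.mk.injEq] at h
    obtain ⟨rfl, rfl, rfl, rfl⟩ := h
    simp [wtGamma, gaussFactor]

def gammaWeight (g h : ℕ → K) (r : ℕ) (a : ℕ → ℕ → ℕ) (i j : ℕ) : K :=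
  if a i j = a (i - 1) (j - 1) then g (bGamma r a i j)
  else if a i j = a (i - 1) j then (1 : K)
  else h (bGamma r a i j)

lemma GGamma_eq_prod_range (g h : ℕ → K) (r : ℕ) (a : ℕ → ℕ → ℕ) :
    GGamma g h r a = ∏ i ∈ range (r + 1), ∏ j ∈ Icc (i + 1) r, gammaWeight g h r a (i + 1) j := by
  rw [prod_range_succ, Icc_eq_empty (by omega), prod_empty, mul_one, range_eq_Ico,
    prod_Ico_add' (fun i => ∏ j ∈ Icc i r, gammaWeight g h r a i j), zero_add]
  rfl

end Weights

namespace IsStrictGTPattern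

variable {r : ℕ} {a : ℕ → ℕ → ℕ}

lemma strictAntiOn (hT : IsStrictGTPattern r a) (i : ℕ) : StrictAntiOn (a i) (Set.Icc i r) :=
  strictAntiOn_of_add_one_lt Set.ordConnected_Icc fun j _ hj hj1 =>
    hT.strict i j hj.1 (by simp only [Set.mem_Icc] at hj1; omega)

lemma interlace_succ (hT : IsStrictGTPattern r a) {i j : ℕ} (hij : i < j) (hjr : j ≤ r) :
    a (i + 1) j ≤ a i (j - 1) ∧ a i j ≤ a (i + 1) j := by
  simpa using hT.interlace (i + 1) j (by omega) hij hjr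

lemma le_top (hT : IsStrictGTPattern r a) {i j : ℕ} (hij : i ≤ j) (hjr : j ≤ r) :
    a i j ≤ a 0 0 := by
  induction i generalizing j with
  | zero => exact (hT.strictAntiOn 0).antitoneOn ⟨le_rfl, by omega⟩ ⟨hij, hjr⟩ hij
  | succ i ih => exact (hT.interlace_succ hij hjr).1.trans (ih (by omega) (by omega))

end IsStrictGTPattern

def rowCountLT (r : ℕ) (a : ℕ → ℕ → ℕ) (i c : ℕ) : ℕ := #{j ∈ Icc i r | a i j < c}

namespace IsGammaIceOf

variable {K : Type*} [CommRing K] {r N : ℕ} {a : ℕ → ℕ → ℕ} {V H : ℕ → ℕ → Bool}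

lemma le_width (hS : IsGammaIceOf r N a V H) (hT : IsStrictGTPattern r a) {i j : ℕ}
    (hij : i ≤ j) (hjr : j ≤ r) : a i j ≤ N :=
  hS.width ▸ hT.le_top hij hjr

lemma vertical_succ (hS : IsGammaIceOf r N a V H) {i c : ℕ} (hi : i ≤ r) (hc : c ≤ N) :
    V (i + 1) c = false ↔ ∃ j, i + 1 ≤ j ∧ j ≤ r ∧ c = a (i + 1) j := by
  rcases hi.lt_or_eq with hi | rfl
  · exact hS.vertical (i + 1) c hi hc
  · simp only [hS.bottom c hc, Bool.true_eq_false, false_iff]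
    omega

lemma rowCountLT_eq_card_filter (hS : IsGammaIceOf r N a V H) (hT : IsStrictGTPattern r a)
    {i c : ℕ} (hi : i ≤ r) (hc : c ≤ N + 1) :
    rowCountLT r a i c = #{c' ∈ range c | V i c' = false} := by
  refine card_nbij (a i) (fun j hj => ?_) (fun j hj l hl => ?_) fun c' hc' => ?_
  · simp only [coe_filter, mem_Icc, mem_range, Set.mem_ofPred_eq] at hj ⊢
    exact ⟨hj.2, (hS.vertical i _ hi (hS.le_width hT hj.1.1 hj.1.2)).2 ⟨j, hj.1.1, hj.1.2, rfl⟩⟩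
  · simp only [coe_filter, mem_Icc, Set.mem_ofPred_eq] at hj hl
    exact (hT.strictAntiOn i).injOn hj.1 hl.1
  · simp only [coe_filter, mem_range, Set.mem_ofPred_eq] at hc'
    obtain ⟨j, hij, hjr, rfl⟩ := (hS.vertical i c' hi (by omega)).1 hc'.2
    exact ⟨j, by simpa using ⟨⟨hij, hjr⟩, hc'.1⟩, rfl⟩

lemma rowCountLT_succ_eq_card_filter (hS : IsGammaIceOf r N a V H) (hT : IsStrictGTPattern r a)
    {i c : ℕ} (hi : i ≤ r) (hc : c ≤ N + 1) :
    rowCountLT r a (i + 1) c = #{c' ∈ range c | V (i + 1) c' = false} := by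
  rcases hi.lt_or_eq with hi | rfl
  · exact hS.rowCountLT_eq_card_filter hT hi hc
  · rw [rowCountLT, Icc_eq_empty (by omega), filter_empty, card_empty, eq_comm, card_eq_zero,
      filter_eq_empty_iff]
    intro c' hc'
    simp [hS.bottom c' (by simp at hc'; omega)]

lemma toNat_add_rowCountLT (hS : IsGammaIceOf r N a V H) (hT : IsStrictGTPattern r a)
    {i c : ℕ} (hi : i ≤ r) (hc : c ≤ N + 1) :
    (H i c).toNat + rowCountLT r a (i + 1) c = rowCountLT r a i c := by
  rw [hS.rowCountLT_succ_eq_card_filter hT hi hc, hS.rowCountLT_eq_card_filter hT hi hc]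
  exact toNat_add_card_filter_eq_of_adm (hS.right i hi) fun c' hc' => hS.adm i c' hi (by omega)

lemma chargeGamma_add_sum (hS : IsGammaIceOf r N a V H) (hT : IsStrictGTPattern r a)
    {i c : ℕ} (hi : i ≤ r) (hc : c ≤ N + 1) :
    chargeGamma H i c + ∑ l ∈ Icc (i + 1) r, (c - a (i + 1) l) = ∑ l ∈ Icc i r, (c - a i l) := by
  rw [← sum_range_card_filter_lt, ← sum_range_card_filter_lt, chargeGamma_eq_sum_toNat,
    ← sum_add_distrib]
  exact sum_congr rfl fun c' hc' => hS.toNat_add_rowCountLT hT hi (by simp at hc'; omega)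

lemma chargeGamma_eq_bGamma (hS : IsGammaIceOf r N a V H) (hT : IsStrictGTPattern r a)
    {i j : ℕ} (hij : i < j) (hjr : j ≤ r) :
    chargeGamma H i (a (i + 1) j) = bGamma r a (i + 1) j := by
  have hcharge := hS.chargeGamma_add_sum hT (i := i) (c := a (i + 1) j) (by omega)
    (by have := hS.le_width hT (i := i + 1) hij hjr; omega)
  have hT' := hT.interlace_succ hij hjr
  rw [sum_tsub_Icc_eq_of_le (j := j) (by omega) fun l hl hlj =>
      hT'.1.trans ((hT.strictAntiOn i).antitoneOn ⟨hl, by omega⟩ ⟨by omega, by omega⟩ (by omega)),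
    sum_tsub_Icc_eq_of_le (j := j) hij fun l hl hlj =>
      (hT.strictAntiOn (i + 1)).antitoneOn ⟨hl, by omega⟩ ⟨hij, hjr⟩ hlj.le] at hcharge
  have hsplit : ∑ l ∈ Icc j r, (a (i + 1) j - a i l) =
      ∑ l ∈ Icc j r, (a (i + 1) j - a (i + 1) l) + ∑ l ∈ Icc j r, (a (i + 1) l - a i l) := by
    rw [← sum_add_distrib]
    refine sum_congr rfl fun l hl => ?_
    rw [mem_Icc] at hl
    have h1 := (hT.interlace_succ (by omega : i < l) hl.2).2
    have h2 := (hT.strictAntiOn (i + 1)).antitoneOn ⟨hij, hjr⟩ ⟨by omega, hl.2⟩ hl.1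
    omega
  rw [bGamma, Nat.add_sub_cancel]
  omega

lemma sum_toNat_not_west (hS : IsGammaIceOf r N a V H) (hT : IsStrictGTPattern r a)
    {i : ℕ} (hi : i ≤ r) :
    ∑ c ∈ range (N + 1), (!H i (c + 1)).toNat = rowSum r a i - rowSum r a (i + 1) := by
  have hcharge := hS.chargeGamma_add_sum hT hi le_rfl
  rw [chargeGamma_eq_sum_toNat, sum_range_succ', hS.right i hi, Bool.toNat_false,
    add_zero] at hcharge
  have hnot : ∑ c ∈ range (N + 1), (!H i (c + 1)).toNat
      + ∑ c ∈ range (N + 1), (H i (c + 1)).toNat = N + 1 := by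
    rw [← sum_add_distrib, sum_congr rfl fun c _ => ?_, sum_const, card_range, smul_eq_mul,
      mul_one]
    cases H i (c + 1) <;> rfl
  have hrow : ∀ k, ∑ l ∈ Icc k r, (N + 1 - a k l) + rowSum r a k = (r + 1 - k) * (N + 1) :=
    fun k => by
    rw [rowSum, sum_tsub_add_sum_of_le fun l hl => ?_, Nat.card_Icc]
    have := hS.le_width hT (mem_Icc.1 hl).1 (mem_Icc.1 hl).2
    omega
  have hi' := hrow i
  rw [show r + 1 - i = (r + 1 - (i + 1)) + 1 by omega, add_one_mul] at hi'
  have := hrow (i + 1)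
  omega

lemma eq_true_of_lt_of_lt (hS : IsGammaIceOf r N a V H) (hT : IsStrictGTPattern r a)
    {i j c : ℕ} (hij : i < j) (hjr : j ≤ r) (hlo : a i j < c) (hhi : c < a i (j - 1)) :
    V i c = true := by
  have hanti := hT.strictAntiOn i
  have hcN : c ≤ N := (hhi.trans_le (hS.le_width hT (by omega) (by omega))).le
  refine Bool.not_eq_false _ |>.mp fun hVf => ?_
  obtain ⟨l, hil, hlr, rfl⟩ := (hS.vertical i c (by omega) hcN).1 hVf
  have h1 : j - 1 < l := (hanti.lt_iff_gt ⟨hil, hlr⟩ ⟨by omega, by omega⟩).1 hhi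
  have h2 : l < j := (hanti.lt_iff_gt ⟨by omega, hjr⟩ ⟨hil, hlr⟩).1 hlo
  omega

lemma gaussFactor_eq_gammaWeight (hS : IsGammaIceOf r N a V H) (hT : IsStrictGTPattern r a)
    (g h : ℕ → K) {i j : ℕ} (hij : i < j) (hjr : j ≤ r) :
    gaussFactor g h (chargeGamma H i (a (i + 1) j)) (V i (a (i + 1) j)) (V (i + 1) (a (i + 1) j))
      (H i (a (i + 1) j)) = gammaWeight g h r a (i + 1) j := by
  have hir : i ≤ r := by omega
  have hcN : a (i + 1) j ≤ N := hS.le_width hT (i := i + 1) hij hjr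
  have hanti := hT.strictAntiOn i
  have hVb : V (i + 1) (a (i + 1) j) = false := (hS.vertical_succ hir hcN).2 ⟨j, hij, hjr, rfl⟩
  have hflux := hS.toNat_add_rowCountLT hT hir (c := a (i + 1) j) (by omega)
  rw [rowCountLT, (hT.strictAntiOn (i + 1)).card_filter_lt (mem_Icc.2 ⟨hij, hjr⟩)] at hflux
  obtain ⟨hup, hdown⟩ := hT.interlace_succ hij hjr
  have hgap : a i j < a i (j - 1) := hanti ⟨by omega, by omega⟩ ⟨by omega, hjr⟩ (by omega)
  rw [gammaWeight, gaussFactor, hVb, hS.chargeGamma_eq_bGamma hT hij hjr, Nat.add_sub_cancel]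
  simp only [Bool.false_eq_true, if_false]
  rcases hdown.eq_or_lt with heq | hlt
  · have hVt : V i (a (i + 1) j) = false :=
      (hS.vertical i _ hir hcN).2 ⟨j, by omega, hjr, heq.symm⟩
    have hcount : rowCountLT r a i (a (i + 1) j) = r - j := by
      rw [rowCountLT, ← heq]
      exact hanti.card_filter_lt (mem_Icc.2 ⟨by omega, hjr⟩)
    have hHf : H i (a (i + 1) j) = false := by rw [← Bool.toNat_eq_zero]; omega
    rw [if_neg (show a (i + 1) j ≠ a i (j - 1) by omega), if_pos heq.symm]
    simp [hVt, hHf]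
  rcases hup.eq_or_lt with heq | hlt'
  · have hVt : V i (a (i + 1) j) = false :=
      (hS.vertical i _ hir hcN).2 ⟨j - 1, by omega, by omega, heq⟩
    have hcount : rowCountLT r a i (a (i + 1) j) = r - (j - 1) := by
      rw [rowCountLT, heq]
      exact hanti.card_filter_lt (mem_Icc.2 ⟨by omega, by omega⟩)
    have hHt : H i (a (i + 1) j) = true := by rw [← Bool.toNat_eq_one]; omega
    rw [if_pos heq]
    simp [hVt, hHt]
  · have hVt := hS.eq_true_of_lt_of_lt hT hij hjr hlt hlt'
    rw [if_neg hlt'.ne, if_neg hlt.ne']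
    simp [hVt]

lemma prod_gaussFactor (hS : IsGammaIceOf r N a V H) (hT : IsStrictGTPattern r a)
    (g h : ℕ → K) {i : ℕ} (hi : i ≤ r) :
    ∏ c ∈ range (N + 1), gaussFactor g h (chargeGamma H i c) (V i c) (V (i + 1) c) (H i c) =
      ∏ j ∈ Icc (i + 1) r, gammaWeight g h r a (i + 1) j := by
  have himage : (Icc (i + 1) r).image (a (i + 1)) ⊆ range (N + 1) := by
    intro c hc
    obtain ⟨j, hj, rfl⟩ := mem_image.1 hc
    rw [mem_Icc] at hj
    exact mem_range.2 (Nat.lt_succ_of_le (hS.le_width hT hj.1 hj.2))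
  rw [← prod_subset himage fun c hc hnc => ?_, prod_image fun j hj l hl hjl => ?_]
  · exact prod_congr rfl fun j hj => hS.gaussFactor_eq_gammaWeight hT g h
      (mem_Icc.1 hj).1 (mem_Icc.1 hj).2
  · rw [coe_Icc] at hj hl
    exact (hT.strictAntiOn (i + 1)).injOn hj hl hjl
  · have hVb : V (i + 1) c = true := by
      refine Bool.not_eq_false _ |>.mp fun hVf => hnc ?_
      obtain ⟨j, hij, hjr, rfl⟩ := (hS.vertical_succ hi (by simpa [Nat.lt_succ_iff] using hc)).1 hVf
      exact mem_image_of_mem _ (mem_Icc.2 ⟨hij, hjr⟩)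
    simp [gaussFactor, hVb]

lemma prod_wtGamma_row (hS : IsGammaIceOf r N a V H) (hT : IsStrictGTPattern r a)
    (g h : ℕ → K) (zi : K) {i : ℕ} (hi : i ≤ r) :
    ∏ c ∈ range (N + 1),
        wtGamma g h zi (chargeGamma H i c) (V i c) (V (i + 1) c) (H i (c + 1)) (H i c) =
      (∏ j ∈ Icc (i + 1) r, gammaWeight g h r a (i + 1) j) *
        zi ^ (rowSum r a i - rowSum r a (i + 1)) := by
  rw [prod_congr rfl fun c hc => wtGamma_eq_of_adm g h zi _
      (hS.adm i c hi (Nat.lt_succ_iff.1 (mem_range.1 hc))),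
    prod_mul_distrib, hS.prod_gaussFactor hT g h hi, prod_pow_eq_pow_sum,
    hS.sum_toNat_not_west hT hi]

end IsGammaIceOf

theorem stmt_4_general {K : Type*} [CommRing K] (g h : ℕ → K) (z : ℕ → K)
    (r N : ℕ) (a : ℕ → ℕ → ℕ) (hN : N = a 0 0)
    (hinter : ∀ i j, 1 ≤ i → i ≤ j → j ≤ r → a i j ≤ a (i - 1) (j - 1) ∧ a (i - 1) j ≤ a i j)
    (hstrict : ∀ i j, i ≤ j → j < r → a i (j + 1) < a i j)
    (V H : ℕ → ℕ → Bool)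
    (hV : ∀ i c, i ≤ r → c ≤ N → (V i c = false ↔ ∃ j, i ≤ j ∧ j ≤ r ∧ c = a i j))
    (hVbot : ∀ c, c ≤ N → V (r + 1) c = true)
    (hHr : ∀ i, i ≤ r → H i 0 = false)
    (hadm : ∀ i c, i ≤ r → c ≤ N → Adm (V i c) (V (i + 1) c) (H i (c + 1)) (H i c)) :
    (∏ i ∈ Finset.range (r + 1), ∏ c ∈ Finset.range (N + 1),
        wtGamma g h (z (r + 1 - i)) (chargeGamma H i c)
          (V i c) (V (i + 1) c) (H i (c + 1)) (H i c))
      = GGamma g h r a *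
        ∏ i ∈ Finset.range (r + 1), z (r + 1 - i) ^ (rowSum r a i - rowSum r a (i + 1)) := by
  have hT : IsStrictGTPattern r a := ⟨hinter, hstrict⟩
  have hS : IsGammaIceOf r N a V H := ⟨hN, hV, hVbot, hHr, hadm⟩
  rw [GGamma_eq_prod_range, ← prod_mul_distrib]
  exact prod_congr rfl fun i hi =>
    hS.prod_wtGamma_row hT g h _ (Nat.lt_succ_iff.1 (mem_range.1 hi))

/-- For a strict Gelfand-Tsetlin pattern `T` of rank `r` corresponding under
the bijection to a state `S` of Gamma ice, the product of Boltzmann weights over all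
vertices of `S` equals
`G^Γ(T) · z_{r+1}^{d_0−d_1} · z_r^{d_1−d_2} ⋯ z_2^{d_{r−1}−d_r} · z_1^{d_r}`.
Rows of ice are numbered `r+1` down to `1` from top to bottom (the ice row with 0-based
index `i` from the top has spectral parameter `z_{r+1−i}`). -/
theorem stmt_4 {K : Type*} [CommRing K] (g h : ℕ → K) (z : ℕ → K)
    (r N : ℕ) (a : ℕ → ℕ → ℕ) (hN : N = a 0 0)
    (hinter : ∀ i j, 1 ≤ i → i ≤ j → j ≤ r → a i j ≤ a (i - 1) (j - 1) ∧ a (i - 1) j ≤ a i j)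
    (hstrict : ∀ i j, i ≤ j → j < r → a i (j + 1) < a i j)
    (V H : ℕ → ℕ → Bool)
    (hV : ∀ i c, i ≤ r → c ≤ N → (V i c = false ↔ ∃ j, i ≤ j ∧ j ≤ r ∧ c = a i j))
    (hVbot : ∀ c, c ≤ N → V (r + 1) c = true)
    (hHr : ∀ i, i ≤ r → H i 0 = false)
    (hHl : ∀ i, i ≤ r → H i (N + 1) = true)
    (hadm : ∀ i c, i ≤ r → c ≤ N → Adm (V i c) (V (i + 1) c) (H i (c + 1)) (H i c)) :
    (∏ i ∈ Finset.range (r + 1), ∏ c ∈ Finset.range (N + 1),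
        wtGamma g h (z (r + 1 - i)) (chargeGamma H i c)
          (V i c) (V (i + 1) c) (H i (c + 1)) (H i c))
      = GGamma g h r a *
        ∏ i ∈ Finset.range (r + 1), z (r + 1 - i) ^ (rowSum r a i - rowSum r a (i + 1)) :=
  stmt_4_general g h z r N a hN hinter hstrict V H hV hVbot hHr hadm
end
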